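/- Assume r ≥ 1. For every complex matrix σ indexed by (Fin s → Fin 4): trace(Π * (|0^r⟩⟨0^r| ⊗ σ)) = trace(Π * (|0^r⟩⟨0^r| ⊗ σ₀)), where σ₀ := |0^s⟩⟨0^s| * σ * |0^s⟩⟨0^s| is the compression of σ onto the rank-one projector |0^s⟩⟨0^s|. -/

import Mathlib

/-! Π is a sum of rank-one terms `|u^r, u^s⟩⟨v^r, v^s|`, so `trace (Π * M)` only sees the entries of
`M` between constant strings. For `M = |0^r⟩⟨0^r| ⊗ σ` with `r ≥ 1` the first factor kills every term
except `u = v = 0`, so the trace is `σ(0^s, 0^s) / 2`, an entry that compressing `σ` onto `|0^s⟩`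
leaves unchanged. -/

open Matrix Kronecker

/-- Standard basis vector of a single block of `q` qudits, supported at the
constant function `fun _ => u`. -/
def basisVec (q : ℕ) (u : Fin 4) : (Fin q → Fin 4) → ℂ :=
  fun x => if x = (fun _ => u) then 1 else 0

/-- Standard basis vector `|u^r, v^s⟩` of the two-block system, supported at
the pair of constant functions. -/
def basisVec2 (r s : ℕ) (u v : Fin 4) : ((Fin r → Fin 4) × (Fin s → Fin 4)) → ℂ :=
  fun x => if x = ((fun _ => u), (fun _ => v)) then 1 else 0

/-- The codespace projector `Π` on all `r + s` qudits. -/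
noncomputable def codeProj2 (r s : ℕ) :
    Matrix ((Fin r → Fin 4) × (Fin s → Fin 4)) ((Fin r → Fin 4) × (Fin s → Fin 4)) ℂ :=
  (1/2 : ℂ) •
    ((∑ u ∈ ({0,1} : Finset (Fin 4)), ∑ v ∈ ({0,1} : Finset (Fin 4)),
        vecMulVec (basisVec2 r s u u) (star (basisVec2 r s v v)))
      + (∑ u ∈ ({2,3} : Finset (Fin 4)), ∑ v ∈ ({2,3} : Finset (Fin 4)),
        vecMulVec (basisVec2 r s u u) (star (basisVec2 r s v v))))

lemma vecMulVec_single_star_single {R I J : Type*} [Semiring R] [StarRing R]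
    [DecidableEq I] [DecidableEq J] (i : I) (j : J) :
    vecMulVec (Pi.single i (1 : R)) (star (Pi.single j 1)) = single i j 1 := by
  rw [← Pi.single_star, star_one, single_eq_single_vecMulVec_single]

lemma basisVec_eq_single (q : ℕ) (u : Fin 4) : basisVec q u = Pi.single (fun _ => u) 1 := by
  funext x
  simp only [basisVec, Pi.single_apply]

lemma basisVec2_eq_single (r s : ℕ) (u v : Fin 4) :
    basisVec2 r s u v = Pi.single ((fun _ => u), (fun _ => v)) 1 := by
  funext x
  simp only [basisVec2, Pi.single_apply]

lemma trace_codeProj2_mul (r s : ℕ)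
    (M : Matrix ((Fin r → Fin 4) × (Fin s → Fin 4)) ((Fin r → Fin 4) × (Fin s → Fin 4)) ℂ) :
    (codeProj2 r s * M).trace = (1/2 : ℂ) *
      ((∑ u ∈ ({0,1} : Finset (Fin 4)), ∑ v ∈ ({0,1} : Finset (Fin 4)),
          M ((fun _ => v), (fun _ => v)) ((fun _ => u), (fun _ => u)))
        + ∑ u ∈ ({2,3} : Finset (Fin 4)), ∑ v ∈ ({2,3} : Finset (Fin 4)),
          M ((fun _ => v), (fun _ => v)) ((fun _ => u), (fun _ => u))) := by
  simp only [codeProj2, basisVec2_eq_single, vecMulVec_single_star_single, smul_mul, add_mul,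
    Finset.sum_mul, trace_smul, trace_add, trace_sum, trace_single_mul, smul_eq_mul, one_mul]

lemma trace_codeProj2_mul_single_kronecker (r s : ℕ) (hr : 1 ≤ r)
    (σ : Matrix (Fin s → Fin 4) (Fin s → Fin 4) ℂ) :
    (codeProj2 r s * (single (fun _ => 0) (fun _ => 0) 1 ⊗ₖ σ)).trace
      = (1/2 : ℂ) * σ (fun _ => 0) (fun _ => 0) := by
  have : Nonempty (Fin r) := ⟨⟨0, hr⟩⟩
  have hconst (u v : Fin 4) : ((fun _ : Fin r => u) = fun _ => v) ↔ u = v := Function.const_inj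
  simp [trace_codeProj2_mul, kroneckerMap_apply, single_apply, hconst]

theorem trace_codeProj_compress (r s : ℕ) (hr : 1 ≤ r)
    (σ : Matrix (Fin s → Fin 4) (Fin s → Fin 4) ℂ) :
    (codeProj2 r s * (vecMulVec (basisVec r 0) (star (basisVec r 0)) ⊗ₖ σ)).trace
    = (codeProj2 r s * (vecMulVec (basisVec r 0) (star (basisVec r 0)) ⊗ₖ
        (vecMulVec (basisVec s 0) (star (basisVec s 0)) * σ *
          vecMulVec (basisVec s 0) (star (basisVec s 0))))).trace := by
  simp only [basisVec_eq_single, vecMulVec_single_star_single,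
    trace_codeProj2_mul_single_kronecker r s hr, single_mul_mul_single, single_apply_same,
    one_mul, mul_one]
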